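/- Let G be a Class 2 graph with critical edge e₁ = y₀y₁, φ ∈ C^Δ(G − e₁), and let K = (y₀, e₁, y₁, e₂, y₂, e₃, y₃) be a Kierstead path with respect to e₁ and φ. Then |φ̄(y₃) ∩ (φ̄(y₀) ∪ φ̄(y₁))| ≤ 1. -/

import Mathlib

open SimpleGraph

/-- A proper `k`-edge-coloring of `G` with colors in `{1,…,k}`: every edge receives a color
in `{1,…,k}` and distinct edges sharing a vertex receive distinct colors. -/
def IsProperEdgeColoring {V : Type*} (G : SimpleGraph V) (k : ℕ) (c : Sym2 V → ℕ) : Prop :=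
  (∀ e ∈ G.edgeSet, c e ∈ Finset.Icc 1 k) ∧
  ∀ e ∈ G.edgeSet, ∀ f ∈ G.edgeSet, e ≠ f → (∃ v, v ∈ e ∧ v ∈ f) → c e ≠ c f

/-- `G` admits a proper `k`-edge-coloring. -/
def EdgeColorable {V : Type*} (G : SimpleGraph V) (k : ℕ) : Prop :=
  ∃ c, IsProperEdgeColoring G k c

/-- The chromatic index of `G`: the least `k` such that `G` is `k`-edge-colorable. -/
noncomputable def chromIndex {V : Type*} (G : SimpleGraph V) : ℕ :=
  sInf {k | EdgeColorable G k}


/-- The set of colors of `{1,…,k}` missing at `v` under the coloring `c`, i.e. not assigned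
to any edge of `G` incident with `v`. -/
def missing {V : Type*} (G : SimpleGraph V) (k : ℕ) (c : Sym2 V → ℕ) (v : V) : Set ℕ :=
  {α | α ∈ Finset.Icc 1 k ∧ ¬ ∃ u, G.Adj v u ∧ c s(v, u) = α}

/-!
Write `δ = c(e₂)` and `γ = c(e₃)`. Two facts about every proper `Δ`-coloring of `G − y₀y₁` drive
the proof: `c̄(y₀) ∩ c̄(y₁) = ∅`, since a common missing color could be given to `y₀y₁`; and hence,
for `α ∈ c̄(y₀)` and `β ∈ c̄(y₁)`, the `(α, β)`-Kempe chain of `y₀` ends at `y₁`, since otherwise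
swapping it creates a common missing color. A Kempe chain is a path or a cycle, so it has at most
two ends; thus when `y₃` misses `α` or `β`, its chain avoids `y₀` and `y₁`, and swapping it keeps
`e₂`, the missing sets at `y₀, y₁` and the Kierstead conditions. If `δ ∈ c̄(y₃)` and
`γ ∈ c̄(y₁)`, the `(δ, γ)`-chain runs `y₀ ⋯ y₁ y₂ y₃` and has the third end `y₃`, a
contradiction; two colors in `c̄(y₃) ∩ (c̄(y₀) ∪ c̄(y₁))` lead to this configuration after a few
swaps at `y₃`.
-/

theorem SimpleGraph.Connected.card_filter_degree_le_one_le_two {W : Type*} [Fintype W]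
    {H : SimpleGraph W} [DecidableRel H.Adj] (hH : H.Connected) (h2 : ∀ v, H.degree v ≤ 2) :
    (Finset.univ.filter fun v => H.degree v ≤ 1).card ≤ 2 := by
  -- 2 (|W| - 1) ≤ 2 |E| = ∑ deg ≤ #L + 2 (|W| - #L), where L = {v | deg v ≤ 1}
  have hE := hH.card_vert_le_card_edgeSet_add_one
  rw [Nat.card_eq_fintype_card, Nat.card_eq_fintype_card, ← edgeFinset_card] at hE
  have hsum : ∑ v, H.degree v ≤ ∑ v, if H.degree v ≤ 1 then 1 else 2 :=
    Finset.sum_le_sum fun v _ => by split_ifs with h <;> [exact h; exact h2 v]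
  rw [Finset.sum_ite, Finset.sum_const, Finset.sum_const, smul_eq_mul, smul_eq_mul,
    H.sum_degrees_eq_twice_card_edges] at hsum
  have := Finset.card_filter_add_card_filter_not (s := Finset.univ)
    (fun v => H.degree v ≤ 1)
  rw [Finset.card_univ] at this
  omega

theorem SimpleGraph.not_reachable_of_degree_le_one {V : Type*} [Fintype V] {H : SimpleGraph V}
    [DecidableRel H.Adj] (h2 : ∀ v, H.degree v ≤ 2) {u v w : V} (hu : H.degree u ≤ 1)
    (hv : H.degree v ≤ 1) (hw : H.degree w ≤ 1) (huv : u ≠ v) (huw : u ≠ w) (hvw : v ≠ w)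
    (hr : H.Reachable u v) : ¬ H.Reachable u w := by
  classical
  intro hr'
  let C := H.connectedComponentMk u
  have hconn : (H.induce C.supp).Connected := C.connected_toSimpleGraph
  have hmem : ∀ x, H.Reachable u x → x ∈ C.supp := fun x hx =>
    ConnectedComponent.eq.mpr hx.symm
  have hdeg : ∀ x : C.supp, (H.induce C.supp).degree x = H.degree x := fun x =>
    degree_induce_of_neighborSet_subset fun y hy => C.mem_supp_of_adj_mem_supp x.2 hy
  have hle := hconn.card_filter_degree_le_one_le_two fun x => (hdeg x).trans_le (h2 x)
  have hsub : ({⟨u, hmem u .rfl⟩, ⟨v, hmem v hr⟩, ⟨w, hmem w hr'⟩} : Finset C.supp) ⊆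
      Finset.univ.filter fun x => (H.induce C.supp).degree x ≤ 1 := by
    intro x hx
    simp only [Finset.mem_insert, Finset.mem_singleton] at hx
    rcases hx with rfl | rfl | rfl <;> simpa [hdeg]
  have := (Finset.card_le_card hsub).trans hle
  rw [Finset.card_insert_of_notMem (by simp [huv, huw]),
    Finset.card_insert_of_notMem (by simp [hvw]), Finset.card_singleton] at this
  omega

section Coloring

variable {V : Type*} {G : SimpleGraph V} {k : ℕ} {c : Sym2 V → ℕ}

theorem color_notMem_missing_left {u v : V} (h : G.Adj u v) : c s(u, v) ∉ missing G k c u :=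
  fun hm => hm.2 ⟨v, h, rfl⟩

theorem IsProperEdgeColoring.eq_of_color_eq (hc : IsProperEdgeColoring G k c) {v u w : V}
    (hu : G.Adj v u) (hw : G.Adj v w) (h : c s(v, u) = c s(v, w)) : u = w := by
  by_contra hne
  exact hc.2 _ hu _ hw (fun he => hne (Sym2.congr_right.mp he))
    ⟨v, Sym2.mem_mk_left _ _, Sym2.mem_mk_left _ _⟩ h

open Classical in
theorem IsProperEdgeColoring.update_deleteEdges {u v : V} {σ : ℕ}
    (hc : IsProperEdgeColoring (G.deleteEdges {s(u, v)}) k c)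
    (hu : σ ∈ missing (G.deleteEdges {s(u, v)}) k c u)
    (hv : σ ∈ missing (G.deleteEdges {s(u, v)}) k c v) :
    IsProperEdgeColoring G k (Function.update c s(u, v) σ) := by
  have hdel : ∀ e ∈ G.edgeSet, e ≠ s(u, v) → e ∈ (G.deleteEdges {s(u, v)}).edgeSet :=
    fun e he hne => by simp [edgeSet_deleteEdges, he, hne]
  have hσ : ∀ f ∈ G.edgeSet, f ≠ s(u, v) → ∀ w ∈ f, w ∈ s(u, v) → c f ≠ σ := by
    intro f hf hne w hwf hw hcol
    obtain ⟨x, rfl⟩ := Sym2.mem_iff_exists.mp hwf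
    have hmiss : σ ∈ missing (G.deleteEdges {s(u, v)}) k c w := by
      rcases Sym2.mem_iff.mp hw with rfl | rfl
      exacts [hu, hv]
    exact hmiss.2 ⟨x, hdel _ hf hne, hcol⟩
  refine ⟨fun e he => ?_, fun e he f hf hef ⟨w, hwe, hwf⟩ => ?_⟩
  · rcases eq_or_ne e s(u, v) with rfl | hne
    · simpa using hu.1
    · simpa [hne] using hc.1 e (hdel e he hne)
  · rcases eq_or_ne e s(u, v) with rfl | he'
    · simpa [hef.symm] using (hσ f hf hef.symm w hwf hwe).symm
    rcases eq_or_ne f s(u, v) with rfl | hf'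
    · simpa [hef] using hσ e he hef w hwe hwf
    simpa [he', hf'] using hc.2 e (hdel e he he') f (hdel f hf hf') hef ⟨w, hwe, hwf⟩

theorem disjoint_missing_deleteEdges_of_lt_chromIndex {u v : V} (hk : k < chromIndex G)
    (hc : IsProperEdgeColoring (G.deleteEdges {s(u, v)}) k c) :
    Disjoint (missing (G.deleteEdges {s(u, v)}) k c u) (missing (G.deleteEdges {s(u, v)}) k c v) :=
  Set.disjoint_left.mpr fun _ hu hv =>
    (Nat.sInf_le (show EdgeColorable G k from ⟨_, hc.update_deleteEdges hu hv⟩)).not_gt hk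

theorem missing_deleteEdges_nonempty [Fintype V] [DecidableRel G.Adj] {u v : V} (h : G.Adj u v) :
    (missing (G.deleteEdges {s(u, v)}) G.maxDegree c v).Nonempty := by
  classical
  let present := ((G.neighborFinset v).erase u).image fun w => c s(v, w)
  have hcard : present.card < (Finset.Icc 1 G.maxDegree).card := by
    calc present.card ≤ ((G.neighborFinset v).erase u).card := Finset.card_image_le
      _ < G.degree v := Finset.card_erase_lt_of_mem (by simpa using h.symm)
      _ ≤ G.maxDegree := G.degree_le_maxDegree v
      _ = (Finset.Icc 1 G.maxDegree).card := by simp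
  obtain ⟨σ, hσ, hσp⟩ := Finset.exists_mem_notMem_of_card_lt_card hcard
  refine ⟨σ, hσ, fun ⟨w, hvw, hcol⟩ => hσp (Finset.mem_image.mpr ⟨w, ?_, hcol⟩)⟩
  rw [deleteEdges_adj] at hvw
  simp only [Finset.mem_erase, mem_neighborFinset]
  exact ⟨fun h' => hvw.2 (by simp [h']), hvw.1⟩

end Coloring

section Kempe

variable {V : Type*} {G : SimpleGraph V} {k : ℕ} {c : Sym2 V → ℕ} {α β : ℕ} {a v : V}

def kempeGraph (G : SimpleGraph V) (c : Sym2 V → ℕ) (α β : ℕ) : SimpleGraph V where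
  Adj u v := G.Adj u v ∧ (c s(u, v) = α ∨ c s(u, v) = β)
  symm := ⟨fun u v h => ⟨h.1.symm, by rw [Sym2.eq_swap]; exact h.2⟩⟩
  loopless := ⟨fun v h => G.loopless.irrefl v h.1⟩

open Classical in
/-- Edges at a vertex of the chain that carry neither `α` nor `β` are fixed by the swap, so it
suffices to ask for one endpoint in the chain. -/
noncomputable def kempeSwap (G : SimpleGraph V) (c : Sym2 V → ℕ) (α β : ℕ) (a : V) :
    Sym2 V → ℕ :=
  fun e => if ∃ v ∈ e, (kempeGraph G c α β).Reachable a v then Equiv.swap α β (c e) else c e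

theorem kempeSwap_of_reachable (h : (kempeGraph G c α β).Reachable a v) (u : V) :
    kempeSwap G c α β a s(v, u) = Equiv.swap α β (c s(v, u)) :=
  if_pos ⟨v, Sym2.mem_mk_left v u, h⟩

theorem kempeSwap_of_reachable_right (h : (kempeGraph G c α β).Reachable a v) (u : V) :
    kempeSwap G c α β a s(u, v) = Equiv.swap α β (c s(u, v)) := by
  rw [Sym2.eq_swap]
  exact kempeSwap_of_reachable h u

theorem kempeSwap_of_not_reachable {u : V} (hvu : G.Adj v u)
    (h : ¬ (kempeGraph G c α β).Reachable a v) :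
    kempeSwap G c α β a s(v, u) = c s(v, u) := by
  unfold kempeSwap
  split_ifs with hr
  · by_contra hne
    have hcol : c s(v, u) = α ∨ c s(v, u) = β := by
      by_contra! hcol
      exact hne (Equiv.swap_apply_of_ne_of_ne hcol.1 hcol.2)
    obtain ⟨w, hw, haw⟩ := hr
    rcases Sym2.mem_iff.mp hw with rfl | rfl
    · exact h haw
    · have hwv : (kempeGraph G c α β).Adj w v := ⟨hvu.symm, by rwa [Sym2.eq_swap]⟩
      exact h (haw.trans hwv.reachable)
  · rfl

theorem IsProperEdgeColoring.kempeSwap (hc : IsProperEdgeColoring G k c)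
    (hα : α ∈ Finset.Icc 1 k) (hβ : β ∈ Finset.Icc 1 k) (a : V) :
    IsProperEdgeColoring G k (kempeSwap G c α β a) := by
  refine ⟨fun e he => ?_, fun e he f hf hef ⟨v, hve, hvf⟩ => ?_⟩
  · unfold _root_.kempeSwap
    split_ifs
    · rw [Equiv.swap_apply_def]
      split_ifs
      exacts [hβ, hα, hc.1 e he]
    · exact hc.1 e he
  · obtain ⟨u, rfl⟩ := Sym2.mem_iff_exists.mp hve
    obtain ⟨w, rfl⟩ := Sym2.mem_iff_exists.mp hvf
    have hcol := hc.2 _ he _ hf hef ⟨v, hve, hvf⟩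
    by_cases hr : (kempeGraph G c α β).Reachable a v
    · rw [kempeSwap_of_reachable hr, kempeSwap_of_reachable hr]
      exact (Equiv.swap α β).injective.ne hcol
    · rwa [kempeSwap_of_not_reachable he hr, kempeSwap_of_not_reachable hf hr]

theorem Finset.swap_apply_mem_iff {ι : Type*} [DecidableEq ι] {s : Finset ι} {a b x : ι}
    (ha : a ∈ s) (hb : b ∈ s) : Equiv.swap a b x ∈ s ↔ x ∈ s := by
  rw [Equiv.swap_apply_def]
  split_ifs with h1 h2 <;> simp_all

theorem mem_missing_kempeSwap_of_reachable (hα : α ∈ Finset.Icc 1 k) (hβ : β ∈ Finset.Icc 1 k)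
    (h : (kempeGraph G c α β).Reachable a v) {z : ℕ} :
    z ∈ missing G k (kempeSwap G c α β a) v ↔ Equiv.swap α β z ∈ missing G k c v := by
  simp only [missing, Set.mem_ofPred_eq, kempeSwap_of_reachable h, Equiv.swap_apply_eq_iff,
    Finset.swap_apply_mem_iff hα hβ]

theorem missing_kempeSwap_of_not_reachable (h : ¬ (kempeGraph G c α β).Reachable a v) :
    missing G k (kempeSwap G c α β a) v = missing G k c v := by
  ext z
  simp only [missing, Set.mem_ofPred_eq]
  refine and_congr_right fun _ => not_congr (exists_congr fun u => and_congr_right fun hvu => ?_)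
  rw [kempeSwap_of_not_reachable hvu h]

theorem IsProperEdgeColoring.degree_kempeGraph_le [Fintype V]
    [DecidableRel (kempeGraph G c α β).Adj] (hc : IsProperEdgeColoring G k c) {S : Finset ℕ}
    (hS : ∀ u, (kempeGraph G c α β).Adj v u → c s(v, u) ∈ S) :
    (kempeGraph G c α β).degree v ≤ S.card := by
  refine Finset.card_le_card_of_injOn (fun u => c s(v, u)) (fun u hu => hS u ?_)
    fun u hu w hw h => hc.eq_of_color_eq ?_ ?_ h
  · simpa using hu
  · exact ((mem_neighborFinset _ _ _).mp hu).1
  · exact ((mem_neighborFinset _ _ _).mp hw).1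

theorem IsProperEdgeColoring.not_reachable_kempeGraph [Fintype V]
    (hc : IsProperEdgeColoring G k c) {u v w : V}
    (hu : α ∈ missing G k c u ∨ β ∈ missing G k c u)
    (hv : α ∈ missing G k c v ∨ β ∈ missing G k c v)
    (hw : α ∈ missing G k c w ∨ β ∈ missing G k c w)
    (huv : u ≠ v) (huw : u ≠ w) (hvw : v ≠ w) (hr : (kempeGraph G c α β).Reachable u v) :
    ¬ (kempeGraph G c α β).Reachable u w := by
  classical
  have hdeg : ∀ x, (α ∈ missing G k c x ∨ β ∈ missing G k c x) →
      (kempeGraph G c α β).degree x ≤ 1 := by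
    rintro x (hx | hx)
    · refine hc.degree_kempeGraph_le (S := {β}) fun y hy => ?_
      exact Finset.mem_singleton.mpr (hy.2.resolve_left fun h => hx.2 ⟨y, hy.1, h⟩)
    · refine hc.degree_kempeGraph_le (S := {α}) fun y hy => ?_
      exact Finset.mem_singleton.mpr (hy.2.resolve_right fun h => hx.2 ⟨y, hy.1, h⟩)
  refine not_reachable_of_degree_le_one (fun x => ?_) (hdeg u hu) (hdeg v hv) (hdeg w hw)
    huv huw hvw hr
  exact (hc.degree_kempeGraph_le (S := {α, β}) fun y hy => by
    rcases hy.2 with h | h <;> simp [h]).trans (Finset.card_le_two)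

end Kempe

section Kierstead

variable {V : Type*} {G : SimpleGraph V} {k : ℕ} {y0 y1 y2 y3 : V} {c : Sym2 V → ℕ}

local notation "φ̄" => missing G k

/-- `G` stands for `G − y0y1` and `k` for `Δ`: `y1` has lost an edge, so it always misses a color,
and since `χ'(G) = Δ + 1` no color is missing at both `y0` and `y1`. -/
structure CriticalPath (G : SimpleGraph V) (k : ℕ) (y0 y1 y2 y3 : V) : Prop where
  ne01 : y0 ≠ y1
  ne03 : y0 ≠ y3
  ne13 : y1 ≠ y3
  adj12 : G.Adj y1 y2
  adj23 : G.Adj y2 y3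
  missing_nonempty : ∀ c, IsProperEdgeColoring G k c → (missing G k c y1).Nonempty
  disjoint_missing : ∀ c, IsProperEdgeColoring G k c →
    Disjoint (missing G k c y0) (missing G k c y1)

/-- The Kierstead conditions, with `c(e2) ∈ c̄(y1)` and `c(e3) ∈ c̄(y2)` dropped because these
edges are present there. -/
structure IsKiersteadColoring (G : SimpleGraph V) (k : ℕ) (y0 y1 y2 y3 : V) (c : Sym2 V → ℕ) :
    Prop where
  proper : IsProperEdgeColoring G k c
  e2_mem : c s(y1, y2) ∈ missing G k c y0
  e3_mem : c s(y2, y3) ∈ missing G k c y0 ∪ missing G k c y1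

namespace CriticalPath

variable {α β x z ρ : ℕ}

theorem reachable_kempeGraph (P : CriticalPath G k y0 y1 y2 y3)
    (hc : IsProperEdgeColoring G k c) (hα : α ∈ φ̄ c y0) (hβ : β ∈ φ̄ c y1) :
    (kempeGraph G c α β).Reachable y0 y1 := by
  by_contra h
  have hdisj := Set.disjoint_left.mp (P.disjoint_missing _ (hc.kempeSwap hα.1 hβ.1 y0))
  refine hdisj (a := β) ?_ ?_
  · rw [mem_missing_kempeSwap_of_reachable hα.1 hβ.1 .rfl, Equiv.swap_apply_right]
    exact hα
  · rw [missing_kempeSwap_of_not_reachable h]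
    exact hβ

theorem color_e2_ne_color_e3 (P : CriticalPath G k y0 y1 y2 y3)
    (hc : IsProperEdgeColoring G k c) :
    c s(y1, y2) ≠ c s(y2, y3) := fun h =>
  P.ne13 (hc.eq_of_color_eq P.adj12.symm P.adj23 (by rwa [Sym2.eq_swap]))

variable [Fintype V]

theorem not_reachable_kempeGraph_y3 (P : CriticalPath G k y0 y1 y2 y3)
    (hc : IsProperEdgeColoring G k c) (hα : α ∈ φ̄ c y0) (hβ : β ∈ φ̄ c y1)
    (h3 : α ∈ φ̄ c y3 ∨ β ∈ φ̄ c y3) :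
    ¬ (kempeGraph G c α β).Reachable y3 y0 ∧ ¬ (kempeGraph G c α β).Reachable y3 y1 := by
  have h01 := P.reachable_kempeGraph hc hα hβ
  have h03 := hc.not_reachable_kempeGraph (Or.inl hα) (Or.inr hβ) h3 P.ne01 P.ne03 P.ne13 h01
  exact ⟨fun h => h03 h.symm, fun h => h03 (h01.trans h.symm)⟩

theorem isKiersteadColoring_kempeSwap (P : CriticalPath G k y0 y1 y2 y3)
    (hK : IsKiersteadColoring G k y0 y1 y2 y3 c) (hα : α ∈ φ̄ c y0) (hβ : β ∈ φ̄ c y1)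
    (h3 : α ∈ φ̄ c y3 ∨ β ∈ φ̄ c y3) :
    IsKiersteadColoring G k y0 y1 y2 y3 (kempeSwap G c α β y3) := by
  obtain ⟨h0, h1⟩ := P.not_reachable_kempeGraph_y3 hK.proper hα hβ h3
  refine ⟨hK.proper.kempeSwap hα.1 hβ.1 y3, ?_, ?_⟩
  · rw [missing_kempeSwap_of_not_reachable h0, kempeSwap_of_not_reachable P.adj12 h1]
    exact hK.e2_mem
  · rw [missing_kempeSwap_of_not_reachable h0, missing_kempeSwap_of_not_reachable h1,
      kempeSwap_of_reachable_right .rfl, Equiv.swap_apply_def]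
    split_ifs
    exacts [Or.inr hβ, Or.inl hα, hK.e3_mem]

theorem color_e2_notMem_missing_y3 (P : CriticalPath G k y0 y1 y2 y3)
    (hK : IsKiersteadColoring G k y0 y1 y2 y3 c) (hγ : c s(y2, y3) ∈ φ̄ c y1) :
    c s(y1, y2) ∉ φ̄ c y3 := fun hδ3 => by
  obtain ⟨h0, -⟩ := P.not_reachable_kempeGraph_y3 hK.proper hK.e2_mem hγ (Or.inl hδ3)
  have h12 : (kempeGraph G c (c s(y1, y2)) (c s(y2, y3))).Adj y1 y2 := ⟨P.adj12, Or.inl rfl⟩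
  have h23 : (kempeGraph G c (c s(y1, y2)) (c s(y2, y3))).Adj y2 y3 := ⟨P.adj23, Or.inr rfl⟩
  have h01 := P.reachable_kempeGraph hK.proper hK.e2_mem hγ
  exact h0 (h01.trans (h12.reachable.trans h23.reachable)).symm

theorem disjoint_missing_y1_y3 (P : CriticalPath G k y0 y1 y2 y3)
    (hK : IsKiersteadColoring G k y0 y1 y2 y3 c) (hδ3 : c s(y1, y2) ∈ φ̄ c y3) :
    Disjoint (φ̄ c y1) (φ̄ c y3) := by
  refine Set.disjoint_left.mpr fun ρ hρ1 hρ3 => ?_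
  rcases hK.e3_mem with hγ0 | hγ1
  -- swapping γ and ρ at y3 recolors e3 with ρ ∈ c̄(y1) and keeps δ missing at y3
  · obtain ⟨-, h1⟩ := P.not_reachable_kempeGraph_y3 hK.proper hγ0 hρ1 (Or.inr hρ3)
    have hδγ := P.color_e2_ne_color_e3 hK.proper
    have hδρ : c s(y1, y2) ≠ ρ := fun h => color_notMem_missing_left P.adj12 (h ▸ hρ1)
    refine P.color_e2_notMem_missing_y3
      (P.isKiersteadColoring_kempeSwap hK hγ0 hρ1 (Or.inr hρ3)) ?_ ?_
    · rw [kempeSwap_of_reachable_right .rfl, Equiv.swap_apply_left,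
        missing_kempeSwap_of_not_reachable h1]
      exact hρ1
    · rw [kempeSwap_of_not_reachable P.adj12 h1,
        mem_missing_kempeSwap_of_reachable hγ0.1 hρ1.1 .rfl,
        Equiv.swap_apply_of_ne_of_ne hδγ hδρ]
      exact hδ3
  · exact P.color_e2_notMem_missing_y3 hK hγ1 hδ3

theorem exists_recoloring_missing_y1_y3_nonempty (P : CriticalPath G k y0 y1 y2 y3)
    (hK : IsKiersteadColoring G k y0 y1 y2 y3 c) (hx0 : x ∈ φ̄ c y0) (hx3 : x ∈ φ̄ c y3) :
    ∃ c', IsKiersteadColoring G k y0 y1 y2 y3 c' ∧ (φ̄ c' y1 ∩ φ̄ c' y3).Nonempty ∧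
      c' s(y1, y2) = c s(y1, y2) ∧
      ∀ z ≠ x, z ∈ φ̄ c y0 → z ∈ φ̄ c y3 → z ∈ φ̄ c' y0 ∧ z ∈ φ̄ c' y3 := by
  obtain ⟨π, hπ1⟩ := P.missing_nonempty c hK.proper
  by_cases hπ3 : π ∈ φ̄ c y3
  · exact ⟨c, hK, ⟨π, hπ1, hπ3⟩, rfl, fun z _ h0 h3 => ⟨h0, h3⟩⟩
  obtain ⟨h0, h1⟩ := P.not_reachable_kempeGraph_y3 hK.proper hx0 hπ1 (Or.inl hx3)
  refine ⟨_, P.isKiersteadColoring_kempeSwap hK hx0 hπ1 (Or.inl hx3), ⟨π, ?_, ?_⟩,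
    kempeSwap_of_not_reachable P.adj12 h1, fun z hzx hz0 hz3 => ⟨?_, ?_⟩⟩
  · rw [missing_kempeSwap_of_not_reachable h1]
    exact hπ1
  · rw [mem_missing_kempeSwap_of_reachable hx0.1 hπ1.1 .rfl, Equiv.swap_apply_right]
    exact hx3
  · rw [missing_kempeSwap_of_not_reachable h0]
    exact hz0
  · have hzπ : z ≠ π := fun h =>
      Set.disjoint_left.mp (P.disjoint_missing c hK.proper) hz0 (h ▸ hπ1)
    rw [mem_missing_kempeSwap_of_reachable hx0.1 hπ1.1 .rfl,
      Equiv.swap_apply_of_ne_of_ne hzx hzπ]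
    exact hz3

theorem eq_color_e2_of_mem_missing_y3 (P : CriticalPath G k y0 y1 y2 y3)
    (hK : IsKiersteadColoring G k y0 y1 y2 y3 c) (hδ3 : c s(y1, y2) ∈ φ̄ c y3)
    (hz3 : z ∈ φ̄ c y3) (hz : z ∈ φ̄ c y0 ∪ φ̄ c y1) : z = c s(y1, y2) := by
  rcases hz with hz0 | hz1
  · by_contra hz
    obtain ⟨c', hK', ⟨ρ, hρ1, hρ3⟩, he2, hkeep⟩ :=
      P.exists_recoloring_missing_y1_y3_nonempty hK hz0 hz3
    have hδ3' := (hkeep _ (Ne.symm hz) hK.e2_mem hδ3).2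
    rw [← he2] at hδ3'
    exact Set.disjoint_left.mp (P.disjoint_missing_y1_y3 hK' hδ3') hρ1 hρ3
  · exact absurd hz3 (Set.disjoint_left.mp (P.disjoint_missing_y1_y3 hK hδ3) hz1)

theorem eq_of_mem_missing_y3 (P : CriticalPath G k y0 y1 y2 y3)
    (hK : IsKiersteadColoring G k y0 y1 y2 y3 c) (hρ1 : ρ ∈ φ̄ c y1) (hρ3 : ρ ∈ φ̄ c y3)
    (hz3 : z ∈ φ̄ c y3) (hz : z ∈ φ̄ c y0 ∪ φ̄ c y1) : z = ρ := by
  have hδρ : c s(y1, y2) ≠ ρ := fun h => color_notMem_missing_left P.adj12 (h ▸ hρ1)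
  by_cases hδ3 : c s(y1, y2) ∈ φ̄ c y3
  · exact absurd (P.eq_color_e2_of_mem_missing_y3 hK hδ3 hρ3 (Or.inr hρ1)).symm hδρ
  -- swapping δ and ρ at y3 makes δ missing at y3, next to z
  by_contra hzρ
  have hzδ : z ≠ c s(y1, y2) := fun h => hδ3 (h ▸ hz3)
  obtain ⟨h0, h1⟩ := P.not_reachable_kempeGraph_y3 hK.proper hK.e2_mem hρ1 (Or.inr hρ3)
  have he2 : kempeSwap G c (c s(y1, y2)) ρ y3 s(y1, y2) = c s(y1, y2) :=
    kempeSwap_of_not_reachable P.adj12 h1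
  have hK' := P.isKiersteadColoring_kempeSwap hK hK.e2_mem hρ1 (Or.inr hρ3)
  refine hzδ (he2 ▸ P.eq_color_e2_of_mem_missing_y3 hK' ?_ ?_ ?_)
  · rw [he2, mem_missing_kempeSwap_of_reachable hK.e2_mem.1 hρ1.1 .rfl, Equiv.swap_apply_left]
    exact hρ3
  · rw [mem_missing_kempeSwap_of_reachable hK.e2_mem.1 hρ1.1 .rfl,
      Equiv.swap_apply_of_ne_of_ne hzδ hzρ]
    exact hz3
  · rw [missing_kempeSwap_of_not_reachable h0, missing_kempeSwap_of_not_reachable h1]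
    exact hz

theorem subsingleton_missing_inter (P : CriticalPath G k y0 y1 y2 y3)
    (hK : IsKiersteadColoring G k y0 y1 y2 y3 c) :
    (φ̄ c y3 ∩ (φ̄ c y0 ∪ φ̄ c y1)).Subsingleton := by
  rintro x ⟨hx3, hx⟩ y ⟨hy3, hy⟩
  by_cases h : ∃ ρ ∈ φ̄ c y1, ρ ∈ φ̄ c y3
  · obtain ⟨ρ, hρ1, hρ3⟩ := h
    exact (P.eq_of_mem_missing_y3 hK hρ1 hρ3 hx3 hx).trans
      (P.eq_of_mem_missing_y3 hK hρ1 hρ3 hy3 hy).symm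
  push Not at h
  have hx0 : x ∈ φ̄ c y0 := hx.resolve_right fun hx1 => h x hx1 hx3
  have hy0 : y ∈ φ̄ c y0 := hy.resolve_right fun hy1 => h y hy1 hy3
  by_contra hxy
  obtain ⟨c', hK', ⟨ρ, hρ1, hρ3⟩, -, hkeep⟩ :=
    P.exists_recoloring_missing_y1_y3_nonempty hK hx0 hx3
  obtain ⟨hy0', hy3'⟩ := hkeep y (Ne.symm hxy) hy0 hy3
  have hyρ := P.eq_of_mem_missing_y3 hK' hρ1 hρ3 hy3' (Or.inl hy0')
  exact Set.disjoint_left.mp (P.disjoint_missing c' hK'.proper) hy0' (hyρ ▸ hρ1)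

end CriticalPath

end Kierstead

theorem stmt_9_general {V : Type*} [Fintype V] (G : SimpleGraph V) [DecidableRel G.Adj]
    (hclass2 : chromIndex G = G.maxDegree + 1) (y0 y1 y2 y3 : V)
    (hdist : y0 ≠ y1 ∧ y0 ≠ y2 ∧ y0 ≠ y3 ∧ y1 ≠ y2 ∧ y1 ≠ y3 ∧ y2 ≠ y3)
    (h01 : G.Adj y0 y1) (h12 : G.Adj y1 y2) (h23 : G.Adj y2 y3)
    (c : Sym2 V → ℕ)
    (hc : IsProperEdgeColoring (G.deleteEdges {s(y0, y1)}) G.maxDegree c)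
    (hK2 : c s(y1, y2) ∈ missing (G.deleteEdges {s(y0, y1)}) G.maxDegree c y0 ∪
      missing (G.deleteEdges {s(y0, y1)}) G.maxDegree c y1)
    (hK3 : c s(y2, y3) ∈ missing (G.deleteEdges {s(y0, y1)}) G.maxDegree c y0 ∪
      missing (G.deleteEdges {s(y0, y1)}) G.maxDegree c y1 ∪
      missing (G.deleteEdges {s(y0, y1)}) G.maxDegree c y2) :
    (missing (G.deleteEdges {s(y0, y1)}) G.maxDegree c y3 ∩
      (missing (G.deleteEdges {s(y0, y1)}) G.maxDegree c y0 ∪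
        missing (G.deleteEdges {s(y0, y1)}) G.maxDegree c y1)).ncard ≤ 1 := by
  obtain ⟨h01d, h02d, h03d, h12d, h13d, -⟩ := hdist
  have adj12 : (G.deleteEdges {s(y0, y1)}).Adj y1 y2 := by simp [h12, h01d.symm, h02d.symm]
  have adj23 : (G.deleteEdges {s(y0, y1)}).Adj y2 y3 := by simp [h23, h02d.symm, h12d.symm]
  have P : CriticalPath (G.deleteEdges {s(y0, y1)}) G.maxDegree y0 y1 y2 y3 :=
    ⟨h01d, h03d, h13d, adj12, adj23, fun _ _ => missing_deleteEdges_nonempty h01,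
      fun _ hc => disjoint_missing_deleteEdges_of_lt_chromIndex (by omega) hc⟩
  have hK : IsKiersteadColoring (G.deleteEdges {s(y0, y1)}) G.maxDegree y0 y1 y2 y3 c :=
    ⟨hc, hK2.resolve_right (color_notMem_missing_left adj12),
      hK3.resolve_right (color_notMem_missing_left adj23)⟩
  have hsub := P.subsingleton_missing_inter hK
  exact (Set.ncard_le_one hsub.finite).mpr hsub

/-- if `K = (y0, e1, y1, e2, y2, e3, y3)` is a Kierstead path with respect to a
critical edge `e1 = y0y1` of a Class 2 graph `G` and a proper `Δ`-edge-coloring `c` of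
`G − e1`, then `|c̄(y3) ∩ (c̄(y0) ∪ c̄(y1))| ≤ 1`. -/
theorem stmt_9 {V : Type*} [Fintype V] (G : SimpleGraph V) [DecidableRel G.Adj]
    (hclass2 : chromIndex G = G.maxDegree + 1) (y0 y1 y2 y3 : V)
    (hdist : y0 ≠ y1 ∧ y0 ≠ y2 ∧ y0 ≠ y3 ∧ y1 ≠ y2 ∧ y1 ≠ y3 ∧ y2 ≠ y3)
    (h01 : G.Adj y0 y1) (h12 : G.Adj y1 y2) (h23 : G.Adj y2 y3)
    (hcrit : chromIndex (G.deleteEdges {s(y0, y1)}) < chromIndex G)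
    (c : Sym2 V → ℕ)
    (hc : IsProperEdgeColoring (G.deleteEdges {s(y0, y1)}) G.maxDegree c)
    (hK2 : c s(y1, y2) ∈ missing (G.deleteEdges {s(y0, y1)}) G.maxDegree c y0 ∪
      missing (G.deleteEdges {s(y0, y1)}) G.maxDegree c y1)
    (hK3 : c s(y2, y3) ∈ missing (G.deleteEdges {s(y0, y1)}) G.maxDegree c y0 ∪
      missing (G.deleteEdges {s(y0, y1)}) G.maxDegree c y1 ∪
      missing (G.deleteEdges {s(y0, y1)}) G.maxDegree c y2) :
    (missing (G.deleteEdges {s(y0, y1)}) G.maxDegree c y3 ∩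
      (missing (G.deleteEdges {s(y0, y1)}) G.maxDegree c y0 ∪
        missing (G.deleteEdges {s(y0, y1)}) G.maxDegree c y1)).ncard ≤ 1 :=
  stmt_9_general G hclass2 y0 y1 y2 y3 hdist h01 h12 h23 c hc hK2 hK3
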